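/- arXiv:1707.05839 — 4 statements merged into one kernel-verified Lean document; each statement's English description precedes it below -/
import Mathlib

section
/- For every n ≥ 4, the 2-token graph of the fan graph F_n is Hamiltonian. -/
open Finset SimpleGraph

/-- The `k`-token graph of a simple graph `G`: vertices are the `k`-subsets of
`V(G)`, with `A ~ B` iff the symmetric difference `A ∆ B` is an edge of `G`. -/
def tokenGraph {V : Type*} [DecidableEq V] (G : SimpleGraph V) (k : ℕ) :
    SimpleGraph {s : Finset V // s.card = k} where
  Adj A B := ∃ u v, G.Adj u v ∧ symmDiff A.1 B.1 = {u, v}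
  symm := by
    constructor
    rintro A B ⟨u, v, h, hs⟩
    exact ⟨u, v, h, by rwa [symmDiff_comm]⟩
  loopless := by
    constructor
    rintro A ⟨u, v, h, hs⟩
    rw [symmDiff_self] at hs
    have : u ∈ (⊥ : Finset V) := hs ▸ Finset.mem_insert_self u {v}
    simp at this

/-- The fan graph `F_n` on vertices `0, …, n-1`: vertices `0, …, n-2` form a path
and the apex `n-1` is adjacent to all of them. -/
def fanGraph (n : ℕ) : SimpleGraph (Fin n) :=
  SimpleGraph.fromRel (fun a b => (a.val + 1 = b.val ∧ b.val < n - 1) ∨ b.val = n - 1)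

/-!
Write a 2-set of `F_{m+2}` (path `0, …, m`, apex `m + 1`) as a pair `(i, j)` with `i < j`,
and list column `i` as `(i, m + 1), (i, m), …, (i, i + 1)`. Inside a column the token at `j`
leaves the apex or slides down the path, and from `(i, i + 1)` to `(i + 1, m + 1)` the token at
`i` jumps to the apex, so columns `1, …, m` in order form a path in the token graph. Column `0`,
rearranged as `(0, m), …, (0, 1), (0, m + 1)` and put in front, closes it into a Hamiltonian
cycle: `(0, m + 1)` goes to `(1, m + 1)` by sliding `0` to `1`, and `(m, m + 1)` returns to
`(0, m)` by moving the apex token to `0`.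
-/

open Function

theorem SimpleGraph.isHamiltonian_of_isChain {V : Type*} [Fintype V] [DecidableEq V]
    {G : SimpleGraph V} {L : List V} (hchain : L.IsChain G.Adj)
    (hclose : ∀ x ∈ L.getLast?, ∀ y ∈ L.head?, G.Adj x y) (hnodup : L.Nodup)
    (hmem : ∀ v, v ∈ L) (hlen : 3 ≤ L.length) : G.IsHamiltonian := by
  intro _
  have hne : L ≠ [] := List.ne_nil_of_length_pos (by omega)
  have hadj : G.Adj (L.getLast hne) (L.head hne) :=
    hclose _ (List.getLast?_eq_some_getLast hne) _ (List.head?_eq_some_head hne)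
  refine ⟨_, .cons hadj (.ofSupport L hne hchain), ?_⟩
  rw [Walk.isHamiltonianCycle_isCycle_and_isHamiltonian_tail,
    Walk.isCycle_iff_isPath_tail_and_le_length]
  simp only [Walk.getVert_cons_succ, Walk.tail_cons, Walk.isPath_def, Walk.support_copy,
    Walk.support_ofSupport, Walk.length_cons, Walk.length_ofSupport, Walk.IsHamiltonian,
    List.count_eq_one_of_mem hnodup (hmem _), hnodup, true_and, implies_true, and_true]
  omega

theorem Finset.symmDiff_pair_pair {α : Type*} [DecidableEq α] {a b c : α} (hab : a ≠ b)
    (hac : a ≠ c) (hbc : b ≠ c) : symmDiff ({a, b} : Finset α) {a, c} = {b, c} := by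
  ext x
  simp only [mem_symmDiff, mem_insert, mem_singleton]
  grind

theorem tokenGraph_two_adj_pair {V : Type*} [DecidableEq V] {G : SimpleGraph V} {a b c : V}
    (hab : a ≠ b) (hac : a ≠ c) (hbc : G.Adj b c) :
    (tokenGraph G 2).Adj ⟨{a, b}, card_pair hab⟩ ⟨{a, c}, card_pair hac⟩ :=
  ⟨b, c, hbc, symmDiff_pair_pair hab hac hbc.ne⟩

theorem fanGraph_adj {n : ℕ} {x y : Fin n} : (fanGraph n).Adj x y ↔
    x ≠ y ∧ (x.val + 1 = y.val ∨ y.val + 1 = x.val ∨ x.val = n - 1 ∨ y.val = n - 1) := by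
  simp only [fanGraph, fromRel_adj]
  omega

-- junk value `{0, 1}` unless `p.1 ≠ p.2` are both vertices of `F_{m+2}`
def pairVertex (m : ℕ) (p : ℕ × ℕ) : {s : Finset (Fin (m + 2)) // s.card = 2} :=
  if h : p.1 ≠ p.2 ∧ p.1 < m + 2 ∧ p.2 < m + 2 then
    ⟨{⟨p.1, h.2.1⟩, ⟨p.2, h.2.2⟩}, card_pair (Fin.ne_of_val_ne h.1)⟩
  else ⟨{0, 1}, card_pair (by simp)⟩

section pairVertex

variable {m : ℕ}

theorem pairVertex_of_ne {a b : ℕ} (hab : a ≠ b) (ha : a < m + 2) (hb : b < m + 2) :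
    pairVertex m (a, b) = ⟨{⟨a, ha⟩, ⟨b, hb⟩}, card_pair (Fin.ne_of_val_ne hab)⟩ :=
  dif_pos ⟨hab, ha, hb⟩

theorem pairVertex_comm (a b : ℕ) : pairVertex m (a, b) = pairVertex m (b, a) := by
  by_cases h : a ≠ b ∧ a < m + 2 ∧ b < m + 2
  · rw [pairVertex_of_ne h.1 h.2.1 h.2.2, pairVertex_of_ne (Ne.symm h.1) h.2.2 h.2.1]
    exact Subtype.ext (pair_comm _ _)
  · rw [pairVertex, pairVertex, dif_neg h, dif_neg (by omega)]

theorem pairVertex_adj {a b c : ℕ} (ha : a ≤ m + 1) (hb : b ≤ m + 1) (hc : c ≤ m + 1)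
    (hab : a ≠ b) (hac : a ≠ c) (hbc : b ≠ c)
    (hedge : b + 1 = c ∨ c + 1 = b ∨ b = m + 1 ∨ c = m + 1) :
    (tokenGraph (fanGraph (m + 2)) 2).Adj (pairVertex m (a, b)) (pairVertex m (a, c)) := by
  rw [pairVertex_of_ne hab (by omega) (by omega), pairVertex_of_ne hac (by omega) (by omega)]
  refine tokenGraph_two_adj_pair (Fin.ne_of_val_ne hab) (Fin.ne_of_val_ne hac) (fanGraph_adj.2 ?_)
  simp only [ne_eq, Fin.ext_iff]
  omega

theorem pairVertex_injOn :
    Set.InjOn (pairVertex m) {p | p.1 < p.2 ∧ p.2 ≤ m + 1} := by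
  rintro ⟨a, b⟩ ⟨hab, hb⟩ ⟨c, d⟩ ⟨hcd, hd⟩ h
  rw [pairVertex_of_ne hab.ne (by omega) (by omega),
    pairVertex_of_ne hcd.ne (by omega) (by omega), Subtype.mk.injEq] at h
  have h' := congrArg ((↑) : Finset (Fin (m + 2)) → Set (Fin (m + 2))) h
  rw [coe_pair, coe_pair, Set.pair_eq_pair_iff] at h'
  simp only [Fin.mk.injEq] at h'
  ext <;> dsimp only <;> omega

theorem exists_pairVertex_eq (s : {s : Finset (Fin (m + 2)) // s.card = 2}) :
    ∃ p : ℕ × ℕ, (p.1 < p.2 ∧ p.2 ≤ m + 1) ∧ pairVertex m p = s := by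
  obtain ⟨s, hs⟩ := s
  obtain ⟨x, y, hxy, rfl⟩ := card_eq_two.mp hs
  rcases lt_or_gt_of_ne hxy with hlt | hlt
  · exact ⟨(x, y), ⟨hlt, by omega⟩, by rw [pairVertex_of_ne (Fin.val_ne_of_ne hxy)]⟩
  · refine ⟨(y, x), ⟨hlt, by omega⟩, ?_⟩
    rw [pairVertex_of_ne (Fin.val_ne_of_ne hxy.symm) y.isLt x.isLt]
    exact Subtype.ext (pair_comm _ _)

end pairVertex

def column (i : ℕ) : ℕ → List (ℕ × ℕ)
  | 0 => []
  | d + 1 => (i, i + d + 1) :: column i d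

def columns (i : ℕ) : ℕ → List (ℕ × ℕ)
  | 0 => []
  | f + 1 => column i (f + 1) ++ columns (i + 1) f

def fanCycle (m : ℕ) : List (ℕ × ℕ) :=
  column 0 m ++ (0, m + 1) :: columns 1 m

section column

variable {m i d : ℕ}

theorem mem_column {p : ℕ × ℕ} :
    p ∈ column i d ↔ p.1 = i ∧ i < p.2 ∧ p.2 ≤ i + d := by
  induction d with
  | zero => simp only [column, List.not_mem_nil, false_iff]; omega
  | succ d ih => simp only [column, List.mem_cons, ih, Prod.ext_iff]; omega

theorem length_column : (column i d).length = d := by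
  induction d with
  | zero => rfl
  | succ d ih => simp [column, ih]

theorem nodup_column : (column i d).Nodup := by
  induction d with
  | zero => exact List.nodup_nil
  | succ d ih => exact List.nodup_cons.2 ⟨fun h => by rw [mem_column] at h; omega, ih⟩

theorem getLast?_column : (column i (d + 1)).getLast? = some (i, i + 1) := by
  induction d with
  | zero => rfl
  | succ d ih => exact List.getLast?_cons_cons.trans ih

theorem isChain_column (h : i + d ≤ m + 1) :
    (column i d).IsChain ((tokenGraph (fanGraph (m + 2)) 2).Adj on pairVertex m) := by
  induction d with
  | zero => exact List.IsChain.nil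
  | succ d ih =>
    refine (ih (by omega)).cons fun q hq => ?_
    cases d with
    | zero => simp [column] at hq
    | succ d =>
      obtain rfl : q = (i, i + d + 1) := by simpa [column] using hq.symm
      apply pairVertex_adj <;> omega

end column

theorem mem_columns {i f : ℕ} {p : ℕ × ℕ} :
    p ∈ columns i f ↔ i ≤ p.1 ∧ p.1 < p.2 ∧ p.2 ≤ i + f := by
  induction f generalizing i with
  | zero => simp only [columns, List.not_mem_nil, false_iff]; omega
  | succ f ih => simp only [columns, List.mem_append, mem_column, ih]; omega

theorem nodup_columns {i f : ℕ} : (columns i f).Nodup := by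
  induction f generalizing i with
  | zero => exact List.nodup_nil
  | succ f ih =>
    refine nodup_column.append ih fun p hp hp' => ?_
    rw [mem_column] at hp
    rw [mem_columns] at hp'
    omega

theorem getLast?_columns {i f : ℕ} : (columns i (f + 1)).getLast? = some (i + f, i + f + 1) := by
  induction f generalizing i with
  | zero => rfl
  | succ f ih =>
    rw [columns, List.getLast?_append_of_ne_nil _ (by simp [columns, column]), ih,
      Nat.add_right_comm i 1 f]
    rfl

theorem isChain_columns {m i f : ℕ} (h : i + f = m + 1) :
    (columns i f).IsChain ((tokenGraph (fanGraph (m + 2)) 2).Adj on pairVertex m) := by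
  induction f generalizing i with
  | zero => exact List.IsChain.nil
  | succ f ih =>
    refine (isChain_column (by omega)).append (ih (by omega)) fun x hx y hy => ?_
    cases f with
    | zero => simp [columns] at hy
    | succ f =>
      rw [getLast?_column, Option.mem_some_iff] at hx
      obtain rfl : y = (i + 1, i + 1 + f + 1) := by simpa [columns, column] using hy.symm
      subst hx
      rw [onFun, pairVertex_comm]
      apply pairVertex_adj <;> omega

section fanCycle

variable {m : ℕ}

theorem mem_fanCycle {p : ℕ × ℕ} : p ∈ fanCycle m ↔ p.1 < p.2 ∧ p.2 ≤ m + 1 := by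
  simp only [fanCycle, List.mem_append, List.mem_cons, mem_column, mem_columns, Prod.ext_iff]
  omega

theorem nodup_fanCycle : (fanCycle m).Nodup := by
  refine nodup_column.append (List.nodup_cons.2 ⟨?_, nodup_columns⟩) fun p hp hp' => ?_
  · rw [mem_columns]; omega
  · rw [mem_column] at hp
    rw [List.mem_cons, mem_columns, Prod.ext_iff] at hp'
    omega

theorem length_fanCycle (hm : 1 ≤ m) : 3 ≤ (fanCycle m).length := by
  obtain ⟨k, rfl⟩ : ∃ k, m = k + 1 := ⟨m - 1, by omega⟩
  simp only [fanCycle, columns, List.length_append, length_column, List.length_cons]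
  omega

theorem head?_fanCycle (hm : 1 ≤ m) : (fanCycle m).head? = some (0, m) := by
  obtain ⟨k, rfl⟩ : ∃ k, m = k + 1 := ⟨m - 1, by omega⟩
  simp [fanCycle, column]

theorem getLast?_fanCycle (hm : 1 ≤ m) : (fanCycle m).getLast? = some (m, m + 1) := by
  obtain ⟨k, rfl⟩ : ∃ k, m = k + 1 := ⟨m - 1, by omega⟩
  rw [fanCycle, List.getLast?_append_of_ne_nil _ (List.cons_ne_nil _ _), List.getLast?_cons,
    getLast?_columns, Nat.add_comm 1 k, Option.getD_some]

theorem isChain_fanCycle (hm : 1 ≤ m) :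
    (fanCycle m).IsChain ((tokenGraph (fanGraph (m + 2)) 2).Adj on pairVertex m) := by
  obtain ⟨k, rfl⟩ : ∃ k, m = k + 1 := ⟨m - 1, by omega⟩
  refine (isChain_column (by omega)).append ((isChain_columns (by omega)).cons ?_) ?_
  · intro y hy
    obtain rfl : y = (1, k + 1 + 1) := by simpa [columns, column, Nat.add_comm 1 k] using hy.symm
    rw [onFun, pairVertex_comm, pairVertex_comm 1]
    apply pairVertex_adj <;> omega
  · intro x hx y hy
    rw [getLast?_column, Option.mem_some_iff] at hx
    rw [List.head?_cons, Option.mem_some_iff] at hy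
    subst hx hy
    apply pairVertex_adj <;> omega

end fanCycle

/-- For every `n ≥ 4`, the 2-token graph of the fan graph `F_n` is Hamiltonian. -/
theorem stmt_5 (n : ℕ) (hn : 4 ≤ n) :
    (tokenGraph (fanGraph n) 2).IsHamiltonian := by
  obtain ⟨m, rfl⟩ : ∃ m, n = m + 2 := ⟨n - 2, by omega⟩
  have hm : 1 ≤ m := by omega
  refine isHamiltonian_of_isChain (L := (fanCycle m).map (pairVertex m))
    ((List.isChain_map _).2 (isChain_fanCycle hm)) ?_
    (nodup_fanCycle.map_on fun _ hp _ hq =>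
      pairVertex_injOn (mem_fanCycle.1 hp) (mem_fanCycle.1 hq))
    (fun s => ?_) (by simpa using length_fanCycle hm)
  · simp only [List.getLast?_map, List.head?_map, getLast?_fanCycle hm, head?_fanCycle hm,
      Option.map_some, Option.mem_some_iff]
    rintro _ rfl _ rfl
    rw [pairVertex_comm 0]
    apply pairVertex_adj <;> omega
  · obtain ⟨p, hp, rfl⟩ := exists_pairVertex_eq s
    exact List.mem_map_of_mem (mem_fanCycle.2 hp)
end

section
/- Fix n ≥ 3 and 2 ≤ k ≤ n−1 with n − k ≥ 1. For each 1 ≤ i ≤ n−k, the subgraph S_i of F_n^{(k)} induced by the k-subsets whose minimum element is i is isomorphic to the (k−1)-token graph of the fan graph F_{n−i}. -/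
open Finset SimpleGraph

/-!
A `k`-subset of `Fin n` with minimum `i` is `{i} ∪ B` for a unique `(k-1)`-subset `B` of the
vertices above `i`, and those vertices induce a copy of `F_{n-i-1}` in `F_n` (the tail of the
path, with the same apex). The common token `i` cancels in symmetric differences, so `{i} ∪ B`
and `{i} ∪ C` are adjacent exactly when `B` and `C` are adjacent in the token graph of that copy.
-/

theorem Finset.min_eq_iff_exists_eq_insert_map {α β : Type*} [LinearOrder α] {a : α}
    (f : β ↪ α) (hf : ∀ x, x ∈ Set.range f ↔ a < x) (A : Finset α) :
    A.min = a ↔ ∃ B : Finset β, A = insert a (B.map f) := by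
  constructor
  · intro hA
    refine ⟨A.preimage f f.injective.injOn, ext fun x => ?_⟩
    rw [mem_insert, mem_map]
    constructor
    · intro hx
      rcases (min_le_of_eq hx hA).eq_or_lt with rfl | hax
      · exact Or.inl rfl
      · obtain ⟨y, rfl⟩ := (hf x).mpr hax
        exact Or.inr ⟨y, mem_preimage.mpr hx, rfl⟩
    · rintro (rfl | ⟨y, hy, rfl⟩)
      · exact mem_of_min hA
      · exact mem_preimage.mp hy
  · rintro ⟨B, rfl⟩
    refine min_insert.trans (min_eq_left (Finset.le_min fun x hx => ?_))
    obtain ⟨y, -, rfl⟩ := mem_map.mp hx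
    exact WithTop.coe_le_coe.mpr ((hf _).mp ⟨y, rfl⟩).le

theorem Finset.symmDiff_insert_insert_of_notMem {α : Type*} [DecidableEq α] {a : α}
    {s t : Finset α} (hs : a ∉ s) (ht : a ∉ t) :
    symmDiff (insert a s) (insert a t) = symmDiff s t := by
  ext x
  by_cases hx : x = a
  · subst hx
    simp [mem_symmDiff, hs, ht]
  · simp [mem_symmDiff, hx]

section TokenGraph

variable {V W : Type*} [DecidableEq V] [DecidableEq W] {G : SimpleGraph V} {H : SimpleGraph W}

theorem SimpleGraph.Embedding.exists_adj_map_eq_pair_iff (f : G ↪g H) (d : Finset V) :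
    (∃ u v, H.Adj u v ∧ d.map f.toEmbedding = {u, v}) ↔ ∃ u v, G.Adj u v ∧ d = {u, v} := by
  constructor
  · rintro ⟨u, v, huv, hd⟩
    have hu : u ∈ d.map f.toEmbedding := hd ▸ mem_insert_self u {v}
    have hv : v ∈ d.map f.toEmbedding := hd ▸ mem_insert_of_mem (mem_singleton_self v)
    obtain ⟨x, -, rfl⟩ := mem_map.mp hu
    obtain ⟨y, -, rfl⟩ := mem_map.mp hv
    refine ⟨x, y, f.map_adj_iff.mp huv, Finset.map_injective f.toEmbedding ?_⟩
    rw [hd, map_insert, map_singleton]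
  · rintro ⟨u, v, huv, rfl⟩
    exact ⟨f u, f v, f.map_adj_iff.mpr huv, by rw [map_insert, map_singleton]; rfl⟩

theorem nonempty_tokenGraph_iso_induce_insert_map (f : G ↪g H) {a : W} (ha : ∀ v, f v ≠ a)
    {l k : ℕ} (hlk : l + 1 = k) (s : Set {t : Finset W // t.card = k})
    (hs : ∀ A, A ∈ s ↔ ∃ B : Finset V, A.1 = insert a (B.map f.toEmbedding)) :
    Nonempty (tokenGraph G l ≃g (tokenGraph H k).induce s) := by
  have ha' (B : Finset V) : a ∉ B.map f.toEmbedding := by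
    simpa only [mem_map] using fun ⟨v, _, hv⟩ => ha v hv
  let φ : {B : Finset V // B.card = l} → s := fun B =>
    ⟨⟨insert a (B.1.map f.toEmbedding),
        by rw [card_insert_of_notMem (ha' _), card_map, B.2, hlk]⟩, (hs _).mpr ⟨B.1, rfl⟩⟩
  have hφ : Function.Bijective φ := by
    refine ⟨fun B C hBC => ?_, fun A => ?_⟩
    · have := congrArg (fun A : s => A.1.1.erase a) hBC
      simp only [φ, erase_insert (ha' _)] at this
      exact Subtype.ext (map_injective _ this)
    · obtain ⟨B, hB⟩ := (hs A.1).mp A.2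
      have hcard : B.card = l := by
        have := congrArg card hB
        rw [A.1.2, card_insert_of_notMem (ha' _), card_map] at this
        omega
      exact ⟨⟨B, hcard⟩, Subtype.ext (Subtype.ext hB.symm)⟩
  refine ⟨⟨Equiv.ofBijective φ hφ, fun {B C} => ?_⟩⟩
  change (∃ u v, H.Adj u v ∧ symmDiff (insert a (B.1.map f.toEmbedding))
    (insert a (C.1.map f.toEmbedding)) = ({u, v} : Finset W)) ↔ (tokenGraph G l).Adj B C
  rw [symmDiff_insert_insert_of_notMem (ha' _) (ha' _), map_eq_image, map_eq_image,
    ← image_symmDiff _ _ f.toEmbedding.injective, ← map_eq_image]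
  exact f.exists_adj_map_eq_pair_iff _

end TokenGraph

def fanGraphShift (n m : ℕ) : fanGraph (n - m) ↪g fanGraph n where
  toFun x := ⟨x.val + m, by omega⟩
  inj' x y hxy := by
    simp only [Fin.mk.injEq] at hxy
    omega
  map_rel_iff' {x y} := by
    have := x.isLt
    have := y.isLt
    change (fanGraph n).Adj ⟨x + m, _⟩ ⟨y + m, _⟩ ↔ _
    simp only [fanGraph, fromRel_adj, ne_eq, Fin.ext_iff]
    omega

theorem mem_range_fanGraphShift_iff {n m : ℕ} (x : Fin n) :
    x ∈ Set.range (fanGraphShift n m) ↔ m ≤ x := by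
  constructor
  · rintro ⟨y, rfl⟩
    exact Nat.le_add_left m y
  · intro h
    exact ⟨⟨x - m, by omega⟩, Fin.ext (Nat.sub_add_cancel h)⟩

/-- Vertices are numbered from `0`, so the minimum `i` here is the paper's `i + 1`. -/
theorem stmt_6_general (n k : ℕ) (hk1 : 2 ≤ k)
    (i : Fin n) :
    Nonempty
      ((SimpleGraph.induce
          {A : {s : Finset (Fin n) // s.card = k} | A.1.min = (i : WithBot (Fin n))}
          (tokenGraph (fanGraph n) k)) ≃g
        tokenGraph (fanGraph (n - (i.val + 1))) (k - 1)) := by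
  have hrange (x : Fin n) : x ∈ Set.range (fanGraphShift n (i + 1)) ↔ i < x :=
    mem_range_fanGraphShift_iff x
  have hshift_ne : ∀ x, fanGraphShift n (i + 1) x ≠ i := fun x hx =>
    lt_irrefl i ((hrange i).mp ⟨x, hx⟩)
  obtain ⟨e⟩ := nonempty_tokenGraph_iso_induce_insert_map (fanGraphShift n (i + 1)) hshift_ne
    (by omega : k - 1 + 1 = k) _ fun A =>
      min_eq_iff_exists_eq_insert_map (fanGraphShift n (i + 1)).toEmbedding hrange A.1
  exact ⟨e.symm⟩

/-- The subgraph of `F_n^{(k)}` induced by the `k`-subsets with minimum element `i`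
(paper index `i+1`, so `1 ≤ i+1 ≤ n-k`) is isomorphic to `F_{n-(i+1)}^{(k-1)}`. -/
theorem stmt_6 (n k : ℕ) (hn : 3 ≤ n) (hk1 : 2 ≤ k) (hk2 : k ≤ n - 1)
    (i : Fin n) (hi : i.val + k < n) :
    Nonempty
      ((SimpleGraph.induce
          {A : {s : Finset (Fin n) // s.card = k} | A.1.min = (i : WithBot (Fin n))}
          (tokenGraph (fanGraph n) k)) ≃g
        tokenGraph (fanGraph (n - (i.val + 1))) (k - 1)) :=
  stmt_6_general n k hk1 i
end

section
/- For all n ≥ 3 and 1 ≤ k ≤ n−1, the Johnson graph J(n,k) is Hamiltonian. -/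
/-!
List the `k`-subsets of `{0, …, n-1}` in revolving-door order: `R(n, k)` is `R(n-1, k)` followed
by the reverse of `R(n-1, k-1)` with `n-1` added to every set. Consecutive sets then differ by
exchanging a single element, i.e. are adjacent in `J(n, k)`. The list starts at `{0, …, k-1}` and
ends at `{0, …, k-2, n-1}`, which are adjacent as well when `0 < k < n`, so it closes up to a
Hamiltonian cycle as soon as `C(n, k) ≥ 3`.
-/

open Finset SimpleGraph

/-- The Johnson graph `J(n,k)`: vertices are the `k`-subsets of an `n`-set,
adjacent iff their intersection has `k-1` elements. -/
def johnsonGraph (n k : ℕ) : SimpleGraph {s : Finset (Fin n) // s.card = k} where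
  Adj A B := A ≠ B ∧ (A.1 ∩ B.1).card = k - 1
  symm := by
    constructor
    rintro A B ⟨h1, h2⟩
    exact ⟨h1.symm, by rwa [Finset.inter_comm]⟩
  loopless := by constructor; rintro A ⟨h1, _⟩; exact h1 rfl

namespace SimpleGraph

variable {V : Type*} [Fintype V] [DecidableEq V] {G : SimpleGraph V}

theorem isHamiltonian_of_isChain_s10 {l : List V} (hne : l ≠ []) (hchain : l.IsChain G.Adj)
    (hclose : G.Adj (l.getLast hne) (l.head hne)) (hnodup : l.Nodup) (hmem : ∀ v, v ∈ l)
    (hlen : 3 ≤ l.length) : G.IsHamiltonian := by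
  intro _
  refine ⟨_, Walk.cons hclose (Walk.ofSupport l hne hchain),
    Walk.isHamiltonianCycle_iff_isCycle_and_support_count_tail_eq_one.2 ⟨?_, fun v => ?_⟩⟩
  · refine Walk.isCycle_iff_isPath_tail_and_le_length.2 ⟨Walk.IsPath.mk' ?_, ?_⟩
    · simpa [Walk.support_tail_of_not_nil] using hnodup
    · rw [Walk.length_cons, Walk.length_ofSupport]
      omega
  · simpa using List.count_eq_one_of_mem hnodup (hmem v)

end SimpleGraph

namespace Finset

variable {α β : Type*} [DecidableEq α] [DecidableEq β] {s t : Finset α} {a : α}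

def IsSwap (s t : Finset α) : Prop := #(s \ t) = 1 ∧ #(t \ s) = 1

theorem IsSwap.symm (h : IsSwap s t) : IsSwap t s := And.symm h

theorem IsSwap.insert (hs : a ∉ s) (ht : a ∉ t) (h : IsSwap s t) :
    IsSwap (insert a s) (insert a t) := by
  rwa [IsSwap, insert_sdiff_insert, insert_sdiff_insert, sdiff_insert_of_notMem hs,
    sdiff_insert_of_notMem ht]

theorem IsSwap.of_map {f : α ↪ β} (h : IsSwap (s.map f) (t.map f)) : IsSwap s t := by
  rwa [IsSwap, ← map_sdiff, ← map_sdiff, card_map, card_map] at h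

theorem IsSwap.ne (h : IsSwap s t) : s ≠ t := by
  rintro rfl
  simpa using h.1

theorem IsSwap.card_inter (h : IsSwap s t) : #(s ∩ t) = #s - 1 := by
  have hle := card_le_card (inter_subset_left (s₁ := s) (s₂ := t))
  have hsdiff := h.1
  rw [card_sdiff, inter_comm] at hsdiff
  omega

end Finset

def revolvingDoor : ℕ → ℕ → List (Finset ℕ)
  | _, 0 => [∅]
  | 0, _ + 1 => []
  | n + 1, k + 1 => revolvingDoor n (k + 1) ++ (revolvingDoor n k).reverse.map (insert n)

section revolvingDoor

variable {n k : ℕ}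

@[simp]
theorem revolvingDoor_zero_right (n : ℕ) : revolvingDoor n 0 = [∅] := by
  cases n <;> rfl

theorem revolvingDoor_succ_succ (n k : ℕ) : revolvingDoor (n + 1) (k + 1) =
    revolvingDoor n (k + 1) ++ (revolvingDoor n k).reverse.map (insert n) := rfl

theorem mem_revolvingDoor {s : Finset ℕ} :
    s ∈ revolvingDoor n k ↔ s ∈ (range n).powersetCard k := by
  induction n generalizing k s with
  | zero =>
    cases k with
    | zero => simp
    | succ k => simp +contextual [revolvingDoor]
  | succ n ih =>
    cases k with
    | zero => simp
    | succ k =>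
      rw [revolvingDoor_succ_succ, List.mem_append, List.mem_map, range_add_one,
        powersetCard_succ_insert notMem_range_self, mem_union, mem_image, ih]
      simp only [List.mem_reverse, ih]

theorem notMem_of_mem_revolvingDoor {s : Finset ℕ} (hs : s ∈ revolvingDoor n k) : n ∉ s :=
  fun h => by simpa using (mem_powersetCard.1 (mem_revolvingDoor.1 hs)).1 h

theorem length_revolvingDoor (n k : ℕ) : (revolvingDoor n k).length = n.choose k := by
  induction n generalizing k with
  | zero => cases k <;> rfl
  | succ n ih =>
    cases k with
    | zero => simp
    | succ k => simp [revolvingDoor_succ_succ, ih, Nat.choose_succ_succ, add_comm]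

theorem nodup_revolvingDoor (n k : ℕ) : (revolvingDoor n k).Nodup := by
  have htoFinset : (revolvingDoor n k).toFinset = (range n).powersetCard k := by
    ext s
    rw [List.mem_toFinset, mem_revolvingDoor]
  rw [← Multiset.coe_nodup, ← Multiset.toFinset_card_eq_card_iff_nodup]
  simp [htoFinset, length_revolvingDoor]

theorem revolvingDoor_eq_nil (h : n < k) : revolvingDoor n k = [] :=
  List.eq_nil_iff_forall_not_mem.2 fun s hs => by
    simp [mem_revolvingDoor, powersetCard_eq_empty.2 (by rwa [card_range] : #(range n) < k)] at hs

theorem revolvingDoor_self (n : ℕ) : revolvingDoor n n = [range n] := by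
  induction n with
  | zero => rfl
  | succ n ih =>
    rw [revolvingDoor_succ_succ, revolvingDoor_eq_nil (Nat.lt_succ_self n), ih, range_add_one]
    rfl

theorem head?_revolvingDoor (h : k ≤ n) : (revolvingDoor n k).head? = some (range k) := by
  induction n generalizing k with
  | zero => simp [Nat.le_zero.1 h]
  | succ n ih =>
    cases k with
    | zero => simp
    | succ k =>
      rcases Nat.lt_or_ge k n with hlt | hge
      · rw [revolvingDoor_succ_succ, List.head?_append, ih hlt]
        rfl
      · obtain rfl : k = n := by omega
        simp [revolvingDoor_self]

theorem getLast?_revolvingDoor_succ_succ (h : k ≤ n) :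
    (revolvingDoor (n + 1) (k + 1)).getLast? = some (insert n (range k)) := by
  rw [revolvingDoor_succ_succ, List.getLast?_append, List.getLast?_map, List.getLast?_reverse,
    head?_revolvingDoor h]
  rfl

theorem isSwap_getLast_revolvingDoor_insert_getLast (h : k < n) :
    ∀ s ∈ (revolvingDoor n (k + 1)).getLast?, ∀ t ∈ (revolvingDoor n k).getLast?,
      IsSwap s (insert n t) := by
  obtain ⟨n, rfl⟩ : ∃ m, n = m + 1 := ⟨n - 1, by omega⟩
  rw [getLast?_revolvingDoor_succ_succ (by omega)]
  rintro s hs t ht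
  rw [Option.mem_some_iff] at hs
  subst hs
  simp only [IsSwap, card_eq_one]
  cases k with
  | zero =>
    obtain rfl : ∅ = t := by simpa using ht
    exact ⟨⟨n, by ext; simp; omega⟩, ⟨n + 1, by ext; simp; omega⟩⟩
  | succ k =>
    rw [getLast?_revolvingDoor_succ_succ (by omega), Option.mem_some_iff] at ht
    subst ht
    exact ⟨⟨k, by ext; simp; omega⟩, ⟨n + 1, by ext; simp; omega⟩⟩

theorem isChain_revolvingDoor (n k : ℕ) : (revolvingDoor n k).IsChain IsSwap := by
  induction n generalizing k with
  | zero => cases k <;> simp [revolvingDoor]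
  | succ n ih =>
    cases k with
    | zero => simp
    | succ k =>
      rw [revolvingDoor_succ_succ, List.isChain_append, List.isChain_map, List.isChain_reverse]
      refine ⟨ih (k + 1), (ih k).imp_of_mem_imp fun s t hs ht hst => ?_, ?_⟩
      · exact hst.symm.insert (notMem_of_mem_revolvingDoor ht) (notMem_of_mem_revolvingDoor hs)
      · rw [List.head?_map, List.head?_reverse]
        rcases Nat.lt_or_ge k n with h | h
        · simpa using isSwap_getLast_revolvingDoor_insert_getLast h
        · simp [revolvingDoor_eq_nil (Nat.lt_succ_of_le h)]

theorem isSwap_getLast_head_revolvingDoor (h₀ : 0 < k) (h : k < n)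
    (hne : revolvingDoor n k ≠ []) :
    IsSwap ((revolvingDoor n k).getLast hne) ((revolvingDoor n k).head hne) := by
  obtain ⟨n, rfl⟩ : ∃ m, n = m + 1 := ⟨n - 1, by omega⟩
  obtain ⟨k, rfl⟩ : ∃ j, k = j + 1 := ⟨k - 1, by omega⟩
  rw [(List.getLast_eq_iff_getLast?_eq_some hne).2 (getLast?_revolvingDoor_succ_succ (by omega)),
    (List.head_eq_iff_head?_eq_some hne).2 (head?_revolvingDoor (by omega))]
  simp only [IsSwap, card_eq_one]
  exact ⟨⟨n, by ext; simp; omega⟩, ⟨k, by ext; simp; omega⟩⟩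

end revolvingDoor

section johnsonGraph

variable {n k : ℕ}

theorem johnsonGraph_adj_of_isSwap {A B : {s : Finset (Fin n) // #s = k}}
    (h : IsSwap A.1 B.1) :
    (johnsonGraph n k).Adj A B :=
  ⟨fun hAB => h.ne (congrArg Subtype.val hAB), by rw [h.card_inter, A.2]⟩

def johnsonVertex (s : Finset ℕ) (hs : s ∈ (range n).powersetCard k) :
    {s : Finset (Fin n) // #s = k} :=
  ⟨s.attachFin fun _ hm => mem_range.1 ((mem_powersetCard.1 hs).1 hm),
    by rw [card_attachFin, (mem_powersetCard.1 hs).2]⟩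

theorem map_valEmbedding_johnsonVertex (s : Finset ℕ) (hs : s ∈ (range n).powersetCard k) :
    (johnsonVertex s hs).1.map Fin.valEmbedding = s :=
  map_valEmbedding_attachFin _

theorem johnsonVertex_injective {s t : Finset ℕ} {hs : s ∈ (range n).powersetCard k}
    {ht : t ∈ (range n).powersetCard k} (h : johnsonVertex s hs = johnsonVertex t ht) :
    s = t := by
  rw [← map_valEmbedding_johnsonVertex s hs, h, map_valEmbedding_johnsonVertex]

theorem exists_johnsonVertex_eq (A : {s : Finset (Fin n) // #s = k}) :
    ∃ s hs, johnsonVertex s hs = A := by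
  refine ⟨A.1.map Fin.valEmbedding,
    mem_powersetCard.2 ⟨fun m hm => ?_, by rw [card_map, A.2]⟩, Subtype.ext ?_⟩
  · obtain ⟨i, -, rfl⟩ := mem_map.1 hm
    exact mem_range.2 i.2
  · ext i
    simp [johnsonVertex, Fin.val_inj]

theorem johnsonGraph_adj_johnsonVertex {s t : Finset ℕ} {hs : s ∈ (range n).powersetCard k}
    {ht : t ∈ (range n).powersetCard k} (h : IsSwap s t) :
    (johnsonGraph n k).Adj (johnsonVertex s hs) (johnsonVertex t ht) := by
  refine johnsonGraph_adj_of_isSwap (IsSwap.of_map (f := Fin.valEmbedding) ?_)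
  rwa [map_valEmbedding_johnsonVertex, map_valEmbedding_johnsonVertex]

end johnsonGraph

theorem Nat.three_le_choose {n k : ℕ} (hn : 3 ≤ n) (hk₀ : 0 < k) (hk : k < n) :
    3 ≤ n.choose k := by
  rcases Nat.lt_or_ge k 2 with hk₁ | hk₂
  · obtain rfl : k = 1 := by omega
    rwa [Nat.choose_one_right]
  · calc 3 ≤ k + 1 := by omega
      _ = (k + 1).choose k := (Nat.choose_succ_self_right k).symm
      _ ≤ n.choose k := Nat.choose_le_choose k hk

/-- For `n ≥ 3` and `1 ≤ k ≤ n-1`, the Johnson graph `J(n,k)` is Hamiltonian. -/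
theorem stmt_10 (n k : ℕ) (hn : 3 ≤ n) (hk1 : 1 ≤ k) (hk2 : k ≤ n - 1) :
    (johnsonGraph n k).IsHamiltonian := by
  have hmem : ∀ s ∈ revolvingDoor n k, s ∈ (range n).powersetCard k :=
    fun _ => mem_revolvingDoor.1
  have hne : revolvingDoor n k ≠ [] := by
    rw [ne_eq, ← List.head?_eq_none_iff, head?_revolvingDoor (by omega)]
    simp
  refine isHamiltonian_of_isChain_s10 (l := (revolvingDoor n k).pmap johnsonVertex hmem)
    (by simpa using hne) ?_ ?_
    ((nodup_revolvingDoor n k).pmap fun _ _ _ _ => johnsonVertex_injective) (fun A => ?_) ?_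
  · exact List.isChain_pmap_of_isChain (R := IsSwap)
      (fun _ _ _ _ => johnsonGraph_adj_johnsonVertex) (isChain_revolvingDoor n k) hmem
  · simpa using johnsonGraph_adj_johnsonVertex
      (isSwap_getLast_head_revolvingDoor hk1 (by omega) hne)
  · obtain ⟨s, hs, rfl⟩ := exists_johnsonVertex_eq A
    exact List.mem_pmap.2 ⟨s, mem_revolvingDoor.2 hs, rfl⟩
  · rw [List.length_pmap, length_revolvingDoor]
    exact Nat.three_le_choose hn hk1 (by omega)
end

section
/- For n ≥ 4, the 2-token graph F_n^{(2)} contains a Hamiltonian cycle in which the vertices {n−2, n−1} and {n−2, n} are adjacent along the cycle. -/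
open Finset SimpleGraph

/-! Write the vertex `{i, j}` (`i < j`) of `F_n^{(2)}` as the pair `(i, j)`; the apex is `n - 1`.
The cycle is explicit: `(0, n-1)`, then for `i = 1, …, n-2` the row
`(i, n-1), (i, n-2), …, (i, i+1)`, then `(0, n-2), (0, n-3), …, (0, 1)`, and back to `(0, n-1)`.
Each step moves one token along an edge of `F_n`: down the path (or off the apex) inside a row,
from `i` to the apex between rows, from the apex to `0` after `(n-2, n-1)`. The row `i = n-3` is
the required edge `{n-3, n-1} {n-3, n-2}`. -/

theorem List.isChain_flatMap {α β : Type*} {R : β → β → Prop} {f : α → List β} {l : List α}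
    (hne : ∀ a ∈ l, f a ≠ []) :
    (l.flatMap f).IsChain R ↔ (∀ a ∈ l, (f a).IsChain R) ∧
      l.IsChain fun a b => ∀ x ∈ (f a).getLast?, ∀ y ∈ (f b).head?, R x y := by
  rw [List.flatMap_def, List.isChain_flatten (by simpa using hne),
    List.forall_mem_map, List.isChain_map]

theorem List.IsInfix.pmap {α β : Type*} {p : α → Prop} (f : ∀ a, p a → β) {l₁ l₂ : List α}
    (h : l₁ <:+: l₂) (H : ∀ a ∈ l₂, p a) :
    l₁.pmap f (fun a ha => H a (h.subset ha)) <:+: l₂.pmap f H := by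
  obtain ⟨s, t, rfl⟩ := h
  simp only [List.pmap_append]
  exact List.infix_append _ _ _

theorem SimpleGraph.exists_isHamiltonianCycle_of_isChain {V : Type*} {G : SimpleGraph V}
    [DecidableEq V] {a : V} {l : List V} (hchain : (l ++ [a]).IsChain G.Adj)
    (hhead : l.head? = some a) (hnodup : l.Nodup) (hcover : ∀ v, v ∈ l) (hlen : 3 ≤ l.length) :
    ∃ p : G.Walk a a, p.IsHamiltonianCycle ∧ p.support = l ++ [a] := by
  obtain ⟨t, rfl⟩ : ∃ t, l = a :: t := List.head?_eq_some_iff.mp hhead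
  obtain ⟨p, hsupp⟩ : ∃ p : G.Walk a a, p.support = a :: t ++ [a] :=
    ⟨(Walk.ofSupport _ (List.cons_ne_nil _ _) hchain).copy List.head_cons (by simp),
      by rw [Walk.support_copy, Walk.support_ofSupport]; rfl⟩
  have hnil : ¬ p.Nil := by
    rw [Walk.nil_iff_support_eq, hsupp]
    simp
  have htail : p.tail.support = t ++ [a] := by
    rw [Walk.support_tail_of_not_nil _ hnil, hsupp, List.cons_append, List.tail_cons]
  have hpath : p.tail.IsPath := by
    rw [Walk.isPath_def, htail]
    exact (List.perm_append_singleton a t).nodup_iff.mpr hnodup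
  have hcycle : p.IsCycle := by
    refine Walk.isCycle_iff_isPath_tail_and_le_length.mpr ⟨hpath, ?_⟩
    have := p.length_support
    rw [hsupp] at this
    simp only [List.length_append, List.length_cons] at this hlen
    omega
  refine ⟨p, Walk.isHamiltonianCycle_isCycle_and_isHamiltonian_tail.mpr
    ⟨hcycle, hpath.isHamiltonian_of_mem fun v => ?_⟩, hsupp⟩
  rw [htail]
  exact (List.perm_append_singleton a t).mem_iff.mpr (hcover v)

namespace FanTokens

def FanAdj (n a b : ℕ) : Prop := a ≠ b ∧ (a + 1 = b ∨ b + 1 = a ∨ a = n - 1 ∨ b = n - 1)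

lemma fanGraph_adj_iff {n : ℕ} {a b : Fin n} : (fanGraph n).Adj a b ↔ FanAdj n a b := by
  have := a.isLt
  have := b.isLt
  simp only [fanGraph, fromRel_adj, FanAdj, ne_eq, Fin.ext_iff]
  omega

def TokenStep (n : ℕ) (q r : ℕ × ℕ) : Prop :=
  q.1 = r.1 ∧ FanAdj n q.2 r.2 ∨ q.1 = r.2 ∧ FanAdj n q.2 r.1 ∨
    q.2 = r.1 ∧ FanAdj n q.1 r.2 ∨ q.2 = r.2 ∧ FanAdj n q.1 r.1

variable {n : ℕ}

def pairVertex (q : ℕ × ℕ) (hq : q.1 < q.2 ∧ q.2 < n) : {s : Finset (Fin n) // s.card = 2} :=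
  ⟨{⟨q.1, hq.1.trans hq.2⟩, ⟨q.2, hq.2⟩}, card_pair (Fin.ne_of_val_ne hq.1.ne)⟩

lemma pairVertex_inj {q r : ℕ × ℕ} (hq : q.1 < q.2 ∧ q.2 < n) (hr : r.1 < r.2 ∧ r.2 < n)
    (h : pairVertex q hq = pairVertex r hr) : q = r := by
  have h := Finset.ext_iff.mp (congrArg Subtype.val h)
  have h1 := h ⟨q.1, hq.1.trans hq.2⟩
  have h2 := h ⟨q.2, hq.2⟩
  have h3 := h ⟨r.1, hr.1.trans hr.2⟩
  simp only [pairVertex, mem_insert, mem_singleton, Fin.ext_iff, true_or, or_true, true_iff,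
    iff_true] at h1 h2 h3
  ext <;> omega

lemma exists_pairVertex_eq (v : {s : Finset (Fin n) // s.card = 2}) :
    ∃ q hq, pairVertex q hq = v := by
  obtain ⟨s, hs⟩ := v
  obtain ⟨a, b, hab, rfl⟩ := card_eq_two.mp hs
  rcases Fin.lt_or_lt_of_ne hab with h | h
  · exact ⟨(a, b), ⟨h, b.isLt⟩, rfl⟩
  · exact ⟨(b, a), ⟨h, a.isLt⟩, Subtype.ext (pair_comm _ _)⟩

lemma TokenStep.adj {q r : ℕ × ℕ} (h : TokenStep n q r) (hq : q.1 < q.2 ∧ q.2 < n)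
    (hr : r.1 < r.2 ∧ r.2 < n) :
    (tokenGraph (fanGraph n) 2).Adj (pairVertex q hq) (pairVertex r hr) := by
  have adj_of : ∀ u v : Fin n, FanAdj n u v →
      symmDiff (pairVertex q hq).1 (pairVertex r hr).1 = {u, v} →
      (tokenGraph (fanGraph n) 2).Adj (pairVertex q hq) (pairVertex r hr) :=
    fun u v huv hs => ⟨u, v, fanGraph_adj_iff.mpr huv, hs⟩
  have hq1 := hq.1.trans hq.2
  have hr1 := hr.1.trans hr.2
  rcases h with ⟨he, hf⟩ | ⟨he, hf⟩ | ⟨he, hf⟩ | ⟨he, hf⟩ <;>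
    [refine adj_of ⟨q.2, hq.2⟩ ⟨r.2, hr.2⟩ hf ?_; refine adj_of ⟨q.2, hq.2⟩ ⟨r.1, hr1⟩ hf ?_;
      refine adj_of ⟨q.1, hq1⟩ ⟨r.2, hr.2⟩ hf ?_; refine adj_of ⟨q.1, hq1⟩ ⟨r.1, hr1⟩ hf ?_] <;>
  · have := hf.1
    ext x
    simp only [pairVertex, symmDiff_def, sup_eq_union, mem_union, mem_sdiff, mem_insert,
      mem_singleton, Fin.ext_iff]
    omega

def segment (i lo hi : ℕ) : List (ℕ × ℕ) := (List.range (hi + 1 - lo)).map fun t => (i, hi - t)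

lemma mem_segment {i lo hi : ℕ} {q : ℕ × ℕ} :
    q ∈ segment i lo hi ↔ q.1 = i ∧ lo ≤ q.2 ∧ q.2 ≤ hi := by
  obtain ⟨a, b⟩ := q
  simp only [segment, List.mem_map, List.mem_range, Prod.mk.injEq]
  constructor
  · rintro ⟨t, ht, rfl, rfl⟩
    omega
  · rintro ⟨rfl, h1, h2⟩
    exact ⟨hi - b, by omega, rfl, by omega⟩

lemma nodup_segment (i lo hi : ℕ) : (segment i lo hi).Nodup := by
  refine List.nodup_range.map_on fun s hs t ht h => ?_
  simp only [List.mem_range, Prod.mk.injEq] at hs ht h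
  omega

lemma head?_segment {i lo hi : ℕ} (h : lo ≤ hi) : (segment i lo hi).head? = some (i, hi) := by
  rw [segment, List.head?_map, List.head?_range, if_neg (by omega)]
  rfl

lemma getLast?_segment {i lo hi : ℕ} (h : lo ≤ hi) : (segment i lo hi).getLast? = some (i, lo) := by
  rw [segment, List.getLast?_map, List.getLast?_range, if_neg (by omega)]
  simp only [Option.map_some, Option.some.injEq, Prod.mk.injEq, true_and]
  omega

lemma isChain_segment {R : ℕ × ℕ → ℕ × ℕ → Prop} {i lo hi : ℕ}
    (h : ∀ j, lo < j → j ≤ hi → R (i, j) (i, j - 1)) : (segment i lo hi).IsChain R := by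
  rw [segment, List.isChain_map, List.isChain_range]
  intro t ht
  simpa [Nat.sub_sub] using h (hi - t) (by omega) (by omega)

def rows (n : ℕ) : List (ℕ × ℕ) :=
  (List.range' 1 (n - 2)).flatMap fun i => segment i (i + 1) (n - 1)

lemma mem_rows {q : ℕ × ℕ} : q ∈ rows n ↔ 1 ≤ q.1 ∧ q.1 < q.2 ∧ q.2 < n := by
  simp only [rows, List.mem_flatMap, List.mem_range'_1, mem_segment]
  constructor
  · rintro ⟨i, hi, rfl, h⟩
    omega
  · intro h
    exact ⟨q.1, by omega, rfl, by omega⟩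

lemma nodup_rows (n : ℕ) : (rows n).Nodup := by
  refine List.nodup_flatMap.mpr ⟨fun i _ => nodup_segment _ _ _, ?_⟩
  refine (List.pairwise_lt_range' (s := 1) (n := n - 2)).imp fun hij => ?_
  exact List.disjoint_left.mpr fun q hi hj => by
    rw [mem_segment] at hi hj
    omega

lemma isChain_rows (n : ℕ) : (rows n).IsChain (TokenStep n) := by
  have hne : ∀ i ∈ List.range' 1 (n - 2), segment i (i + 1) (n - 1) ≠ [] := fun i hi =>
    List.ne_nil_of_mem (a := (i, i + 1)) <| mem_segment.mpr ⟨rfl, le_rfl, by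
      rw [List.mem_range'_1] at hi
      omega⟩
  rw [rows, List.isChain_flatMap hne]
  refine ⟨fun i _ => isChain_segment fun j hj _ => ?_, ?_⟩
  · unfold TokenStep FanAdj
    omega
  refine (List.isChain_range' 1 (n - 2) 1).imp_of_mem_imp fun i j hi hj hij => ?_
  rw [List.mem_range'_1] at hi hj
  rw [getLast?_segment (by omega), head?_segment (by omega)]
  simp only [Option.mem_def, Option.some.injEq, forall_eq']
  unfold TokenStep FanAdj
  omega

lemma head?_rows (hn : 3 ≤ n) : (rows n).head? = some (1, n - 1) := by
  rw [rows, List.head?_flatMap, show n - 2 = n - 3 + 1 by omega, List.range'_succ,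
    List.findSome?_cons, head?_segment (by omega)]

lemma getLast?_rows (hn : 3 ≤ n) : (rows n).getLast? = some (n - 2, n - 1) := by
  rw [rows, List.getLast?_flatMap, show n - 2 = n - 3 + 1 by omega, List.range'_concat,
    List.reverse_append, List.reverse_singleton, List.singleton_append, List.findSome?_cons,
    getLast?_segment (by omega)]
  simp only [Option.some.injEq, Prod.mk.injEq]
  omega

lemma infix_rows (hn : 4 ≤ n) : [(n - 3, n - 1), (n - 3, n - 2)] <:+: rows n := by
  have hseg : segment (n - 3) (n - 3 + 1) (n - 1) = [(n - 3, n - 1), (n - 3, n - 2)] := by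
    simp only [segment, show n - 1 + 1 - (n - 3 + 1) = 2 by omega, List.range_succ,
      List.range_zero, List.nil_append, List.cons_append, List.map_cons, List.map_nil, tsub_zero,
      List.cons.injEq, Prod.mk.injEq, true_and, and_true]
    omega
  rw [← hseg, rows, List.flatMap_def]
  exact List.infix_of_mem_flatten (List.mem_map_of_mem (List.mem_range'_1.mpr (by omega)))

def fanTour (n : ℕ) : List (ℕ × ℕ) := rows n ++ segment 0 1 (n - 2)

lemma mem_cons_fanTour (hn : 2 ≤ n) {q : ℕ × ℕ} :
    q ∈ (0, n - 1) :: fanTour n ↔ q.1 < q.2 ∧ q.2 < n := by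
  obtain ⟨a, b⟩ := q
  simp only [fanTour, List.mem_cons, List.mem_append, mem_rows, mem_segment, Prod.mk.injEq]
  omega

lemma nodup_cons_fanTour (n : ℕ) : ((0, n - 1) :: fanTour n).Nodup := by
  rw [fanTour, List.nodup_cons, List.nodup_append]
  refine ⟨fun h => ?_, nodup_rows n, nodup_segment _ _ _, fun q hq r hr h => ?_⟩
  · rw [List.mem_append, mem_rows, mem_segment] at h
    omega
  · rw [mem_rows] at hq
    rw [mem_segment, ← h] at hr
    omega

lemma isChain_cons_fanTour_append (hn : 3 ≤ n) :
    ((0, n - 1) :: fanTour n ++ [(0, n - 1)]).IsChain (TokenStep n) := by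
  have hcol : (segment 0 1 (n - 2) ++ [(0, n - 1)]).IsChain (TokenStep n) := by
    refine List.isChain_append.mpr ⟨isChain_segment fun j hj _ => ?_, List.isChain_singleton _, ?_⟩
    · unfold TokenStep FanAdj
      omega
    · rw [getLast?_segment (by omega)]
      simp only [List.head?_cons, Option.mem_def, Option.some.injEq, forall_eq']
      unfold TokenStep FanAdj
      omega
  rw [List.cons_append, fanTour, List.append_assoc]
  refine List.isChain_cons.mpr ⟨?_, List.isChain_append.mpr ⟨isChain_rows n, hcol, ?_⟩⟩
  · rw [List.head?_append, head?_rows hn]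
    simp only [Option.some_or, Option.mem_def, Option.some.injEq, forall_eq']
    unfold TokenStep FanAdj
    omega
  · rw [getLast?_rows hn, List.head?_append, head?_segment (by omega)]
    simp only [Option.some_or, Option.mem_def, Option.some.injEq, forall_eq']
    unfold TokenStep FanAdj
    omega

lemma three_le_length_cons_fanTour (hn : 4 ≤ n) : 3 ≤ ((0, n - 1) :: fanTour n).length := by
  simp only [fanTour, segment, List.length_cons, List.length_append, List.length_map,
    List.length_range]
  omega

lemma exists_isHamiltonianCycle_mem_edges (hn : 4 ≤ n) :
    ∃ (v : {s : Finset (Fin n) // s.card = 2}) (p : (tokenGraph (fanGraph n) 2).Walk v v),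
      p.IsHamiltonianCycle ∧
        s(pairVertex (n - 3, n - 2) (by omega), pairVertex (n - 3, n - 1) (by omega)) ∈
          p.edges := by
  have hpair : ∀ q ∈ (0, n - 1) :: fanTour n ++ [(0, n - 1)], q.1 < q.2 ∧ q.2 < n := by
    intro q hq
    refine (mem_cons_fanTour (by omega)).mp ?_
    rw [List.mem_append, List.mem_singleton] at hq
    exact hq.elim id fun h => h ▸ List.mem_cons_self
  have hchain := List.isChain_pmap_of_isChain (fun q r hq hr h => h.adj hq hr)
    (isChain_cons_fanTour_append (by omega)) hpair
  rw [List.pmap_append] at hchain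
  obtain ⟨p, hp, hsupp⟩ := exists_isHamiltonianCycle_of_isChain hchain rfl
    ((nodup_cons_fanTour n).pmap fun q hq r hr => pairVertex_inj hq hr)
    (fun v => by
      obtain ⟨q, hq, rfl⟩ := exists_pairVertex_eq v
      exact List.mem_pmap.mpr ⟨q, (mem_cons_fanTour (by omega)).mpr hq, rfl⟩)
    (by rw [List.length_pmap]; exact three_le_length_cons_fanTour hn)
  refine ⟨_, p, hp, Walk.infix_support_iff_mem_edges.mp (Or.inr ?_)⟩
  have hinfix : [(n - 3, n - 1), (n - 3, n - 2)] <:+: (0, n - 1) :: fanTour n ++ [(0, n - 1)] :=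
    (infix_rows hn).trans ⟨[(0, n - 1)], segment 0 1 (n - 2) ++ [(0, n - 1)], by simp [fanTour]⟩
  have := hinfix.pmap pairVertex hpair
  rw [List.pmap_append] at this
  rwa [hsupp]

end FanTokens

/-- For `n ≥ 4`, `F_n^{(2)}` has a Hamiltonian cycle in which the vertices
`{n-2, n-1}` and `{n-2, n}` (0-indexed: `{n-3, n-2}` and `{n-3, n-1}`) are
adjacent along the cycle. -/
theorem stmt_18 (n : ℕ) (hn : 4 ≤ n) :
    ∃ (X Y : {s : Finset (Fin n) // s.card = 2}),
      X.1 = Finset.univ.filter (fun x : Fin n => x.val = n - 3 ∨ x.val = n - 2) ∧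
      Y.1 = Finset.univ.filter (fun x : Fin n => x.val = n - 3 ∨ x.val = n - 1) ∧
      ∃ p : (tokenGraph (fanGraph n) 2).Walk X X,
        p.IsHamiltonianCycle ∧ s(X, Y) ∈ p.edges := by
  obtain ⟨v, p, hp, hedge⟩ := FanTokens.exists_isHamiltonianCycle_mem_edges hn
  have hX := hp.mem_support (FanTokens.pairVertex (n - 3, n - 2) (by omega))
  refine ⟨_, _, ?_, ?_, p.rotate _ hX, hp.rotate hX, (p.rotate_edges _ hX).mem_iff.mpr hedge⟩ <;>
  · ext x
    simp only [FanTokens.pairVertex, mem_insert, mem_singleton, mem_filter, mem_univ, true_and,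
      Fin.ext_iff]
end
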